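/- For all β ∈ ℝᵐ, κ₀ > 0, and κ ∈ [0,∞)^r, the function l̃(β,κ₀,κ,y) = n log κ₀ + log det Ṽ(κ) + κ₀⁻¹ (y − Xβ)'Ṽ(κ)⁻¹(y − Xβ) is bounded below by n·log(s) − n·log(n) + n, where s = y'P_{(H+M)^⊥} y, provided y ∉ M(X,Z) (so that s > 0). -/

import Mathlib

/-!
Let `w = P_{(H+M)^⊥} y`. It is orthogonal to the columns of `X` and of every `Zᵢ`, so
`Ṽ(κ) w = w`, hence `Ṽ(κ)⁻¹ w = w`, and `(y - Xβ)'w = y'w = w'w = s`. Expanding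
`(e - w)'Ṽ(κ)⁻¹(e - w) ≥ 0` for `e = y - Xβ` gives `e'Ṽ(κ)⁻¹e ≥ 2s - s = s`. Since `Ṽ(κ) - I` is
positive semidefinite, `det Ṽ(κ) ≥ 1`. So `l̃ ≥ n log κ₀ + s/κ₀`, and minimising over `κ₀ > 0`
(at `κ₀ = s/n`) gives `n log (s/n) + n`.
-/

open Matrix Filter

noncomputable def Vtilde {n r : ℕ} {k : Fin r → ℕ}
    (Z : ∀ i : Fin r, Matrix (Fin n) (Fin (k i)) ℝ) (κ : Fin r → ℝ) :
    Matrix (Fin n) (Fin n) ℝ :=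
  1 + ∑ i, κ i • (Z i * (Z i)ᵀ)

noncomputable def colSpaceXZ {n m r : ℕ} {k : Fin r → ℕ}
    (X : Matrix (Fin n) (Fin m) ℝ) (Z : ∀ i : Fin r, Matrix (Fin n) (Fin (k i)) ℝ) :
    Submodule ℝ (Fin n → ℝ) :=
  LinearMap.range X.mulVecLin ⊔ ⨆ i, LinearMap.range (Z i).mulVecLin

noncomputable def sXZ {n m r : ℕ} {k : Fin r → ℕ}
    (X : Matrix (Fin n) (Fin m) ℝ) (Z : ∀ i : Fin r, Matrix (Fin n) (Fin (k i)) ℝ)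
    (y : Fin n → ℝ) : ℝ :=
  let L : EuclideanSpace ℝ (Fin n) ≃ₗ[ℝ] (Fin n → ℝ) :=
    WithLp.linearEquiv 2 ℝ (Fin n → ℝ)
  let S : Submodule ℝ (EuclideanSpace ℝ (Fin n)) :=
    (colSpaceXZ X Z).map L.symm.toLinearMap
  ‖(Submodule.orthogonalProjectionOnto Sᗮ (L.symm y) : EuclideanSpace ℝ (Fin n))‖ ^ 2

noncomputable def ltilde {n m r : ℕ} {k : Fin r → ℕ}
    (X : Matrix (Fin n) (Fin m) ℝ) (Z : ∀ i : Fin r, Matrix (Fin n) (Fin (k i)) ℝ)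
    (y : Fin n → ℝ) (β : Fin m → ℝ) (κ₀ : ℝ) (κ : Fin r → ℝ) : ℝ :=
  n * Real.log κ₀ + Real.log (Vtilde Z κ).det
    + κ₀⁻¹ * ((y - X.mulVec β) ⬝ᵥ (Vtilde Z κ)⁻¹.mulVec (y - X.mulVec β))

namespace Matrix

variable {ι : Type*} [Fintype ι] {A : Matrix ι ι ℝ}

theorem PosSemidef.one_le_eigenvalues_one_add [DecidableEq ι] (hA : A.PosSemidef) (i : ι) :
    1 ≤ (PosDef.one.add_posSemidef hA).isHermitian.eigenvalues i := by
  set hH := (PosDef.one.add_posSemidef hA).isHermitian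
  have hv : star ⇑(hH.eigenvectorBasis i) ⬝ᵥ ⇑(hH.eigenvectorBasis i) = 1 := by
    rw [dotProduct_comm, ← EuclideanSpace.inner_eq_star_dotProduct, real_inner_self_eq_norm_sq,
      hH.eigenvectorBasis.orthonormal.1 i, one_pow]
  rw [hH.eigenvalues_eq, add_mulVec, one_mulVec, dotProduct_add, hv, RCLike.re_to_real]
  exact le_add_of_nonneg_right (hA.dotProduct_mulVec_nonneg _)

theorem PosSemidef.one_le_det_one_add [DecidableEq ι] (hA : A.PosSemidef) :
    1 ≤ (1 + A).det := by
  rw [(PosDef.one.add_posSemidef hA).isHermitian.det_eq_prod_eigenvalues]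
  exact Finset.one_le_prod fun i _ ↦ by simpa using hA.one_le_eigenvalues_one_add i

/-- Expand `0 ≤ (e - w)ᵀ A (e - w)`, using `A w = w` and the symmetry of `A`. -/
theorem PosSemidef.two_mul_dotProduct_sub_le (hA : A.PosSemidef) {w : ι → ℝ}
    (hw : A *ᵥ w = w) (e : ι → ℝ) : 2 * (e ⬝ᵥ w) - w ⬝ᵥ w ≤ e ⬝ᵥ A *ᵥ e := by
  have hsymm : w ⬝ᵥ A *ᵥ e = e ⬝ᵥ w := by
    rw [dotProduct_mulVec, ← mulVec_transpose, ← conjTranspose_eq_transpose_of_trivial,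
      hA.isHermitian.eq, hw, dotProduct_comm]
  have h := hA.dotProduct_mulVec_nonneg (e - w)
  simp only [star_trivial, mulVec_sub, sub_dotProduct, dotProduct_sub, hw, hsymm] at h
  linarith

end Matrix

/-- The right side, as a function of `t > 0`, is minimal at `t = s / c`. -/
theorem Real.mul_log_sub_mul_log_add_le {c s t : ℝ} (hc : 0 ≤ c) (hs : 0 < s) (ht : 0 < t) :
    c * Real.log s - c * Real.log c + c ≤ c * Real.log t + t⁻¹ * s := by
  rcases hc.eq_or_lt with rfl | hc
  · simp only [zero_mul, sub_zero, add_zero, zero_add]; positivity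
  have h := Real.log_le_sub_one_of_pos (show 0 < s / (c * t) by positivity)
  rw [Real.log_div hs.ne' (by positivity), Real.log_mul hc.ne' ht.ne'] at h
  have h' := mul_le_mul_of_nonneg_left h hc.le
  have hct : c * (s / (c * t)) = t⁻¹ * s := by field_simp
  linarith

section OrthResidual

variable {ι : Type*} [Fintype ι] (K : Submodule ℝ (ι → ℝ)) (y : ι → ℝ)

/-- `P_{K^⊥} y` for the standard dot product, computed in `EuclideanSpace` as in `sXZ`. -/
noncomputable def orthResidual : ι → ℝ :=
  WithLp.ofLp ((K.map (WithLp.linearEquiv 2 ℝ (ι → ℝ)).symm.toLinearMap)ᗮ.starProjection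
    (WithLp.toLp 2 y))

variable {K y}

theorem dotProduct_orthResidual_of_mem {z : ι → ℝ} (hz : z ∈ K) :
    z ⬝ᵥ orthResidual K y = 0 := by
  have h := Submodule.inner_right_of_mem_orthogonal (Submodule.mem_map_of_mem
    (f := (WithLp.linearEquiv 2 ℝ (ι → ℝ)).symm.toLinearMap) hz)
    (Submodule.starProjection_apply_mem _ (WithLp.toLp 2 y))
  rwa [EuclideanSpace.inner_eq_star_dotProduct, star_trivial, dotProduct_comm] at h

theorem dotProduct_orthResidual_self : y ⬝ᵥ orthResidual K y =
    orthResidual K y ⬝ᵥ orthResidual K y := by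
  set S := (K.map (WithLp.linearEquiv 2 ℝ (ι → ℝ)).symm.toLinearMap)ᗮ
  have h := Submodule.starProjection_inner_eq_zero (WithLp.toLp 2 y) _
    (S.starProjection_apply_mem (WithLp.toLp 2 y))
  rw [inner_sub_left, sub_eq_zero] at h
  rw [EuclideanSpace.inner_eq_star_dotProduct, EuclideanSpace.inner_eq_star_dotProduct,
    star_trivial, star_trivial] at h
  exact (dotProduct_comm _ _).trans h

theorem orthResidual_ne_zero (hy : y ∉ K) : orthResidual K y ≠ 0 := by
  intro h0
  rw [orthResidual, WithLp.ofLp_eq_zero, Submodule.starProjection_apply_eq_zero_iff,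
    Submodule.orthogonal_orthogonal] at h0
  obtain ⟨z, hz, hzy⟩ := h0
  have hzy' : z = y := congrArg WithLp.ofLp hzy
  exact hy (hzy' ▸ hz)

end OrthResidual

section Vtilde

variable {n m r : ℕ} {k : Fin r → ℕ} {X : Matrix (Fin n) (Fin m) ℝ}
  {Z : ∀ i : Fin r, Matrix (Fin n) (Fin (k i)) ℝ} {κ : Fin r → ℝ} {y : Fin n → ℝ}

theorem posSemidef_sum_smul_mul_transpose (hκ : ∀ i, 0 ≤ κ i) :
    (∑ i, κ i • (Z i * (Z i)ᵀ)).PosSemidef :=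
  posSemidef_sum _ fun i _ ↦ by
    simpa using (posSemidef_self_mul_conjTranspose (Z i)).smul (hκ i)

theorem Vtilde_posDef (hκ : ∀ i, 0 ≤ κ i) : (Vtilde Z κ).PosDef :=
  PosDef.one.add_posSemidef (posSemidef_sum_smul_mul_transpose hκ)

theorem one_le_det_Vtilde (hκ : ∀ i, 0 ≤ κ i) : 1 ≤ (Vtilde Z κ).det :=
  (posSemidef_sum_smul_mul_transpose hκ).one_le_det_one_add

theorem Vtilde_mulVec_eq_self {w : Fin n → ℝ} (hw : ∀ i, (Z i)ᵀ *ᵥ w = 0) :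
    Vtilde Z κ *ᵥ w = w := by
  simp [Vtilde, add_mulVec, sum_mulVec, smul_mulVec, ← mulVec_mulVec, hw]

theorem transpose_mulVec_orthResidual_colSpaceXZ (i : Fin r) :
    (Z i)ᵀ *ᵥ orthResidual (colSpaceXZ X Z) y = 0 := by
  refine dotProduct_eq_zero _ fun c ↦ ?_
  have hc : Z i *ᵥ c ∈ colSpaceXZ X Z :=
    Submodule.mem_sup_right (Submodule.mem_iSup_of_mem i ⟨c, rfl⟩)
  rw [← dotProduct_orthResidual_of_mem hc, dotProduct_comm, dotProduct_mulVec, vecMul_transpose]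

theorem sXZ_eq_dotProduct_orthResidual :
    sXZ X Z y = orthResidual (colSpaceXZ X Z) y ⬝ᵥ orthResidual (colSpaceXZ X Z) y := by
  rw [sXZ, ← real_inner_self_eq_norm_sq, EuclideanSpace.inner_eq_star_dotProduct, star_trivial]
  rfl

theorem sXZ_pos (hy : y ∉ colSpaceXZ X Z) : 0 < sXZ X Z y := by
  rw [sXZ_eq_dotProduct_orthResidual]
  simpa using dotProduct_star_self_pos_iff.mpr (orthResidual_ne_zero hy)

theorem sXZ_le_dotProduct_inv_Vtilde_mulVec (hκ : ∀ i, 0 ≤ κ i) (β : Fin m → ℝ) :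
    sXZ X Z y ≤ (y - X *ᵥ β) ⬝ᵥ (Vtilde Z κ)⁻¹ *ᵥ (y - X *ᵥ β) := by
  set w := orthResidual (colSpaceXZ X Z) y
  have hV := Vtilde_posDef (Z := Z) hκ
  have hVw : (Vtilde Z κ)⁻¹ *ᵥ w = w := by
    have := hV.isUnit.invertible
    exact inv_mulVec_eq_vec (Vtilde_mulVec_eq_self transpose_mulVec_orthResidual_colSpaceXZ).symm
  have hXβ : X *ᵥ β ∈ colSpaceXZ X Z := Submodule.mem_sup_left ⟨β, rfl⟩
  have hew : (y - X *ᵥ β) ⬝ᵥ w = w ⬝ᵥ w := by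
    rw [sub_dotProduct, dotProduct_orthResidual_self, dotProduct_orthResidual_of_mem hXβ, sub_zero]
  have := hV.inv.posSemidef.two_mul_dotProduct_sub_le hVw (y - X *ᵥ β)
  rw [sXZ_eq_dotProduct_orthResidual]
  linarith

end Vtilde

theorem ltilde_lower_bound_general
    (n m r : ℕ) (k : Fin r → ℕ)
    (X : Matrix (Fin n) (Fin m) ℝ) (Z : ∀ i : Fin r, Matrix (Fin n) (Fin (k i)) ℝ)
    (y : Fin n → ℝ) (hy : y ∉ colSpaceXZ X Z) :
    ∀ (β : Fin m → ℝ) (κ₀ : ℝ) (κ : Fin r → ℝ), 0 < κ₀ → (∀ i, 0 ≤ κ i) →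
      (n : ℝ) * Real.log (sXZ X Z y) - n * Real.log n + n
        ≤ ltilde X Z y β κ₀ κ := by
  intro β κ₀ κ hκ₀ hκ
  calc (n : ℝ) * Real.log (sXZ X Z y) - n * Real.log n + n
      ≤ n * Real.log κ₀ + κ₀⁻¹ * sXZ X Z y :=
        Real.mul_log_sub_mul_log_add_le n.cast_nonneg (sXZ_pos hy) hκ₀
    _ ≤ ltilde X Z y β κ₀ κ :=
        add_le_add (le_add_of_nonneg_right (Real.log_nonneg (one_le_det_Vtilde hκ)))
          (mul_le_mul_of_nonneg_left (sXZ_le_dotProduct_inv_Vtilde_mulVec hκ β)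
            (inv_nonneg.mpr hκ₀.le))

/-- Part (a): if `y ∉ M(X,Z)`, then `l̃ ≥ n log s_{X,Z} − n log n + n` everywhere. -/
theorem ltilde_lower_bound
    (n m r : ℕ) (k : Fin r → ℕ) (hmn : m < n) (hk : ∑ i, k i < n)
    (X : Matrix (Fin n) (Fin m) ℝ) (Z : ∀ i : Fin r, Matrix (Fin n) (Fin (k i)) ℝ)
    (y : Fin n → ℝ) (hy : y ∉ colSpaceXZ X Z) :
    ∀ (β : Fin m → ℝ) (κ₀ : ℝ) (κ : Fin r → ℝ), 0 < κ₀ → (∀ i, 0 ≤ κ i) →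
      (n : ℝ) * Real.log (sXZ X Z y) - n * Real.log n + n
        ≤ ltilde X Z y β κ₀ κ :=
  ltilde_lower_bound_general n m r k X Z y hy
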